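/- For $\alpha > 0$ let $\Phi_\alpha(x) = \prod_{j=0}^\infty \Phi(x + j\sqrt{\alpha})$. Then as $x \to +\infty$, $1 - \Phi_\alpha\big(\tfrac{1}{2}\sqrt{\alpha} + 2\alpha^{-1/2}\log x\big) \sim \frac{\sqrt{\alpha}\, e^{-\alpha/8}}{2\sqrt{2\pi}} \cdot \frac{1}{x \log x} e^{-2(\log x)^2/\alpha}$. -/

import Mathlib

open Filter Topology MeasureTheory

noncomputable def Phi (x : ℝ) : ℝ :=
  ∫ t in Set.Iic x, Real.exp (-t ^ 2 / 2) / Real.sqrt (2 * Real.pi)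

/-!
The factor `j = 0` dominates the product. By Mills' ratio `1 - Φ(y) ~ φ(y) / y`, and the
Gaussian decay `φ(y + c) ≤ φ(y) e^{-cy}` gives `1 - Φ(y + ja) ≤ φ(y) / y · e^{-jay}`. Hence
`1 - ∏ Φ(y + ja)` lies between `1 - Φ(y)` and `∑ⱼ (1 - Φ(y + ja)) ≤ φ(y) / (y (1 - e^{-ay}))`,
so it is `~ φ(y) / y` as `y → ∞`. At `y = √α / 2 + 2 log x / √α`, `a = √α`, the quotient
`φ(y) / y` is the normalising factor of the statement times `1 + α / (4 log x)`.
-/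

open Real Set ProbabilityTheory

local notation "φ" => gaussianPDFReal 0 1

lemma gaussianPDFReal_zero_one (t : ℝ) : φ t = exp (-t ^ 2 / 2) / √(2 * π) := by
  simp [gaussianPDFReal, div_eq_inv_mul]

lemma Phi_eq_integral (x : ℝ) : Phi x = ∫ t in Iic x, φ t := by
  simp only [Phi, gaussianPDFReal_zero_one]

lemma Phi_nonneg (x : ℝ) : 0 ≤ Phi x := by
  rw [Phi_eq_integral]
  exact setIntegral_nonneg measurableSet_Iic fun t _ => gaussianPDFReal_nonneg 0 1 t

lemma one_sub_Phi (x : ℝ) : 1 - Phi x = ∫ t in Ioi x, φ t := by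
  have h := intervalIntegral.integral_Iic_add_Ioi (μ := volume) (b := x)
    (integrable_gaussianPDFReal 0 1).integrableOn (integrable_gaussianPDFReal 0 1).integrableOn
  rw [integral_gaussianPDFReal_eq_one 0 one_ne_zero] at h
  rw [Phi_eq_integral]
  linarith

lemma Phi_le_one (x : ℝ) : Phi x ≤ 1 := by
  have : 0 ≤ ∫ t in Ioi x, φ t :=
    setIntegral_nonneg measurableSet_Ioi fun t _ => gaussianPDFReal_nonneg 0 1 t
  linarith [one_sub_Phi x]

lemma hasDerivAt_gaussianPDFReal_zero_one (t : ℝ) : HasDerivAt φ (-t * φ t) t := by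
  have h : HasDerivAt (fun t : ℝ => -t ^ 2 / 2) (-t) t :=
    ((hasDerivAt_pow 2 t).neg.div_const 2).congr_deriv (by ring)
  simp only [funext gaussianPDFReal_zero_one]
  exact (h.exp.div_const _).congr_deriv (by ring)

lemma tendsto_gaussianPDFReal_zero_one_atTop : Tendsto φ atTop (𝓝 0) := by
  have h : Tendsto (fun t : ℝ => -t ^ 2 / 2) atTop atBot :=
    (tendsto_neg_atTop_atBot.comp (tendsto_pow_atTop two_ne_zero)).atBot_div_const two_pos
  simpa [funext gaussianPDFReal_zero_one] using (tendsto_exp_atBot.comp h).div_const (√(2 * π))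

/-- Mills' identity: `-φ(t) / t` is a primitive of `φ(t) (1 + 1 / t²)`. -/
lemma hasDerivAt_neg_gaussianPDFReal_div {t : ℝ} (ht : t ≠ 0) :
    HasDerivAt (fun s => -(φ s / s)) (φ t * (1 + 1 / t ^ 2)) t :=
  ((hasDerivAt_gaussianPDFReal_zero_one t).div (hasDerivAt_id t) ht).neg.congr_deriv
    (by simp only [id]; field_simp; ring)

lemma integral_Ioi_gaussianPDFReal_mul_one_add_inv_sq {y : ℝ} (hy : 0 < y) :
    IntegrableOn (fun t => φ t * (1 + 1 / t ^ 2)) (Ioi y) ∧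
      ∫ t in Ioi y, φ t * (1 + 1 / t ^ 2) = φ y / y := by
  have hderiv (t : ℝ) (ht : t ∈ Ici y) := hasDerivAt_neg_gaussianPDFReal_div (hy.trans_le ht).ne'
  have hnonneg : ∀ t ∈ Ioi y, 0 ≤ φ t * (1 + 1 / t ^ 2) := fun t _ =>
    mul_nonneg (gaussianPDFReal_nonneg 0 1 t) (by positivity)
  have hlim : Tendsto (fun s => -(φ s / s)) atTop (𝓝 0) := by
    simpa [div_eq_mul_inv] using
      (tendsto_gaussianPDFReal_zero_one_atTop.mul tendsto_inv_atTop_zero).neg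
  refine ⟨integrableOn_Ioi_deriv_of_nonneg' hderiv hnonneg hlim, ?_⟩
  rw [integral_Ioi_of_hasDerivAt_of_nonneg' hderiv hnonneg hlim]
  ring

lemma integral_Ioi_gaussianPDFReal_le {y : ℝ} (hy : 0 < y) : ∫ t in Ioi y, φ t ≤ φ y / y := by
  obtain ⟨hint, heq⟩ := integral_Ioi_gaussianPDFReal_mul_one_add_inv_sq hy
  rw [← heq]
  refine setIntegral_mono_on (integrable_gaussianPDFReal 0 1).integrableOn hint measurableSet_Ioi
    fun t _ => le_mul_of_one_le_right (gaussianPDFReal_nonneg 0 1 t) ?_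
  linarith [one_div_nonneg.2 (sq_nonneg t)]

lemma le_integral_Ioi_gaussianPDFReal {y : ℝ} (hy : 0 < y) :
    φ y / y ≤ (1 + 1 / y ^ 2) * ∫ t in Ioi y, φ t := by
  obtain ⟨hint, heq⟩ := integral_Ioi_gaussianPDFReal_mul_one_add_inv_sq hy
  rw [← heq, ← integral_const_mul]
  refine setIntegral_mono_on hint ((integrable_gaussianPDFReal 0 1).const_mul _).integrableOn
    measurableSet_Ioi fun t ht => ?_
  have : 1 / t ^ 2 ≤ 1 / y ^ 2 := one_div_le_one_div_of_le (by positivity) (by gcongr; exact ht.le)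
  exact (mul_le_mul_of_nonneg_left (by linarith) (gaussianPDFReal_nonneg 0 1 t)).trans_eq
    (mul_comm _ _)

lemma gaussianPDFReal_add_le {y c : ℝ} (hc : 0 ≤ c) :
    φ (y + c) ≤ φ y * exp (-(c * y)) := by
  simp only [gaussianPDFReal_zero_one, div_mul_eq_mul_div, ← exp_add]
  gcongr
  nlinarith

lemma one_sub_Phi_add_le {y c : ℝ} (hy : 0 < y) (hc : 0 ≤ c) :
    1 - Phi (y + c) ≤ φ y / y * exp (-(c * y)) :=
  calc 1 - Phi (y + c) ≤ φ (y + c) / (y + c) := by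
        rw [one_sub_Phi]; exact integral_Ioi_gaussianPDFReal_le (by positivity)
    _ ≤ φ (y + c) / y := by gcongr; exacts [gaussianPDFReal_nonneg 0 1 _, le_add_of_nonneg_right hc]
    _ ≤ φ y * exp (-(c * y)) / y := by gcongr; exact gaussianPDFReal_add_le hc
    _ = φ y / y * exp (-(c * y)) := div_mul_eq_mul_div _ _ _ |>.symm

lemma Finset.one_sub_sum_le_prod {ι R : Type*} [CommRing R] [LinearOrder R] [IsStrictOrderedRing R]
    {f : ι → R} (h0 : ∀ i, 0 ≤ f i) (h1 : ∀ i, f i ≤ 1) (s : Finset ι) :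
    1 - ∑ i ∈ s, (1 - f i) ≤ ∏ i ∈ s, f i := by
  classical
  induction s using Finset.induction_on with
  | empty => simp
  | insert a s has ih =>
    rw [Finset.prod_insert has, Finset.sum_insert has]
    have : ∏ i ∈ s, f i ≤ 1 := Finset.prod_le_one (fun i _ => h0 i) fun i _ => h1 i
    nlinarith [h0 a, h1 a]

section UnitIntervalProducts

variable {ι : Type*} {f : ι → ℝ}

lemma multipliable_of_nonneg_of_le_one (h0 : ∀ i, 0 ≤ f i) (h1 : ∀ i, f i ≤ 1) :
    Multipliable f := by
  classical
  have hanti : Antitone fun s : Finset ι => ∏ i ∈ s, f i := fun s t hst => by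
    simp only
    rw [← Finset.prod_sdiff hst]
    exact mul_le_of_le_one_left (Finset.prod_nonneg fun i _ => h0 i)
      (Finset.prod_le_one (fun i _ => h0 i) fun i _ => h1 i)
  refine ⟨_, tendsto_atTop_ciInf hanti ⟨0, ?_⟩⟩
  rintro _ ⟨s, rfl⟩
  exact Finset.prod_nonneg fun i _ => h0 i

lemma tprod_le_of_nonneg_of_le_one (h0 : ∀ i, 0 ≤ f i) (h1 : ∀ i, f i ≤ 1) (i : ι) :
    ∏' j, f j ≤ f i := by
  classical
  refine le_of_tendsto (multipliable_of_nonneg_of_le_one h0 h1).hasProd ?_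
  filter_upwards [eventually_ge_atTop {i}] with s hs
  rw [← Finset.mul_prod_erase s f (hs (Finset.mem_singleton_self i))]
  exact mul_le_of_le_one_right (h0 i) (Finset.prod_le_one (fun j _ => h0 j) fun j _ => h1 j)

lemma one_sub_tsum_le_tprod (h0 : ∀ i, 0 ≤ f i) (h1 : ∀ i, f i ≤ 1)
    (hs : Summable fun i => 1 - f i) : 1 - ∑' i, (1 - f i) ≤ ∏' i, f i := by
  refine ge_of_tendsto (multipliable_of_nonneg_of_le_one h0 h1).hasProd (Eventually.of_forall ?_)
  intro s
  have := hs.sum_le_tsum s fun i _ => sub_nonneg.2 (h1 i)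
  linarith [Finset.one_sub_sum_le_prod h0 h1 s]

end UnitIntervalProducts

section ShiftedProduct

variable {a y : ℝ}

lemma one_sub_Phi_add_mul_le (ha : 0 ≤ a) (hy : 0 < y) (j : ℕ) :
    1 - Phi (y + j * a) ≤ φ y / y * exp (-(a * y)) ^ j := by
  rw [← exp_nat_mul, show (j : ℝ) * -(a * y) = -(j * a * y) by ring]
  exact one_sub_Phi_add_le hy (by positivity)

lemma one_sub_tprod_Phi_le (ha : 0 < a) (hy : 0 < y) :
    1 - ∏' j : ℕ, Phi (y + j * a) ≤ φ y / y * (1 - exp (-(a * y)))⁻¹ := by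
  have hr : exp (-(a * y)) < 1 := exp_lt_one_iff.2 (neg_neg_of_pos (mul_pos ha hy))
  have hgeo : HasSum (fun j : ℕ => φ y / y * exp (-(a * y)) ^ j)
      (φ y / y * (1 - exp (-(a * y)))⁻¹) :=
    (hasSum_geometric_of_lt_one (exp_pos _).le hr).mul_left _
  have hbound := one_sub_Phi_add_mul_le ha.le hy
  have hs : Summable fun j : ℕ => 1 - Phi (y + j * a) :=
    hgeo.summable.of_nonneg_of_le (fun j => sub_nonneg.2 (Phi_le_one _)) hbound
  have hprod := one_sub_tsum_le_tprod (fun j => Phi_nonneg _) (fun j => Phi_le_one _) hs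
  linarith [hasSum_le hbound hs.hasSum hgeo]

lemma le_one_sub_tprod_Phi (hy : 0 < y) :
    φ y / y * (1 + 1 / y ^ 2)⁻¹ ≤ 1 - ∏' j : ℕ, Phi (y + j * a) := by
  have hmills := le_integral_Ioi_gaussianPDFReal hy
  rw [← one_sub_Phi] at hmills
  have hfirst := tprod_le_of_nonneg_of_le_one (fun j : ℕ => Phi_nonneg (y + j * a))
    (fun j => Phi_le_one _) 0
  rw [Nat.cast_zero, zero_mul, add_zero] at hfirst
  rw [← div_eq_mul_inv, div_le_iff₀' (by positivity)]
  exact hmills.trans (mul_le_mul_of_nonneg_left (by linarith) (by positivity))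

lemma tendsto_one_sub_tprod_Phi_div (ha : 0 < a) :
    Tendsto (fun y => (1 - ∏' j : ℕ, Phi (y + j * a)) / (φ y / y)) atTop (𝓝 1) := by
  have hlow : Tendsto (fun y : ℝ => (1 + 1 / y ^ 2)⁻¹) atTop (𝓝 1) := by
    simpa using (tendsto_const_nhds.add ((tendsto_const_nhds (x := (1 : ℝ))).div_atTop
      (tendsto_pow_atTop two_ne_zero))).inv₀ (by norm_num : (1 : ℝ) + 0 ≠ 0)
  have hup : Tendsto (fun y : ℝ => (1 - exp (-(a * y)))⁻¹) atTop (𝓝 1) := by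
    simpa using (tendsto_const_nhds.sub (tendsto_exp_neg_atTop_nhds_zero.comp
      (tendsto_id.const_mul_atTop ha))).inv₀ (by norm_num : (1 : ℝ) - 0 ≠ 0)
  refine tendsto_of_tendsto_of_tendsto_of_le_of_le' hlow hup ?_ ?_ <;>
    filter_upwards [eventually_gt_atTop 0] with y hy
  · rw [le_div_iff₀ (div_pos (gaussianPDFReal_pos 0 1 y one_ne_zero) hy), mul_comm]
    exact le_one_sub_tprod_Phi hy
  · rw [div_le_iff₀ (div_pos (gaussianPDFReal_pos 0 1 y one_ne_zero) hy), mul_comm]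
    exact one_sub_tprod_Phi_le ha hy

end ShiftedProduct

lemma gaussianPDFReal_div_at_log_scale {α x : ℝ} (hα : 0 < α) (hx : 1 < x) :
    φ (√α / 2 + 2 * log x / √α) / (√α / 2 + 2 * log x / √α) * (1 + α / (4 * log x)) =
      √α * exp (-α / 8) / (2 * √(2 * π)) * (1 / (x * log x)) * exp (-2 * log x ^ 2 / α) := by
  have hL : 0 < log x := log_pos hx
  have hexp : exp (-(√α / 2 + 2 * log x / √α) ^ 2 / 2) =
      exp (-α / 8) * exp (-log x) * exp (-2 * log x ^ 2 / α) := by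
    rw [← exp_add, ← exp_add]
    congr 1
    field_simp
    rw [sq_sqrt hα.le]
    ring
  rw [gaussianPDFReal_zero_one, hexp, exp_neg, exp_log (zero_lt_one.trans hx)]
  field_simp
  rw [sq_sqrt hα.le]
  ring

theorem stmt_18 (α : ℝ) (hα : 0 < α) :
    Tendsto
      (fun x : ℝ =>
        (1 - ∏' j : ℕ,
            Phi (Real.sqrt α / 2 + 2 * Real.log x / Real.sqrt α + j * Real.sqrt α)) /
          (Real.sqrt α * Real.exp (-α / 8) / (2 * Real.sqrt (2 * Real.pi)) *
            (1 / (x * Real.log x)) * Real.exp (-2 * Real.log x ^ 2 / α)))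
      atTop (𝓝 1) := by
  have hs : 0 < √α := sqrt_pos.2 hα
  have hY : Tendsto (fun x => √α / 2 + 2 * log x / √α) atTop atTop :=
    tendsto_atTop_add_const_left _ _
      ((tendsto_log_atTop.const_mul_atTop two_pos).atTop_div_const hs)
  have hcorr : Tendsto (fun x => 1 + α / (4 * log x)) atTop (𝓝 1) := by
    simpa using tendsto_const_nhds.add ((tendsto_const_nhds (x := α)).div_atTop
      (tendsto_log_atTop.const_mul_atTop four_pos))
  have hlim := ((tendsto_one_sub_tprod_Phi_div hs).comp hY).div hcorr one_ne_zero
  rw [div_one] at hlim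
  refine hlim.congr' ?_
  filter_upwards [eventually_gt_atTop 1] with x hx
  rw [Pi.div_apply, Function.comp_apply, div_div, gaussianPDFReal_div_at_log_scale hα hx]
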